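/- Let G = (V, E) be a finite simple graph with nonnegative edge costs ℓ : E → ℝ. Let T ⊆ E be a tree subgraph and let v, w, k ∈ V(T) be three distinct vertices such that the three edges {v, w}, {v, k}, {w, k} all belong to E and ℓ({v, w}) ≥ ℓ({v, k}) and ℓ({v, w}) ≥ ℓ({w, k}). If {v, w} ∈ T, then there exists a tree subgraph T' with V(T') = V(T), with cost(T') ≤ cost(T), with {v, w} ∉ T', and such that T ∖ {{v, w}, {v, k}, {w, k}} = T' ∖ {{v, w}, {v, k}, {w, k}}. -/

import Mathlib

variable {V : Type*} [Fintype V] [DecidableEq V]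

/-- The set of endpoints of the edges of an edge set `T` (the vertices "visited" by `T`). -/
def edgeVerts (T : Finset (Sym2 V)) : Finset V :=
  Finset.univ.filter (fun v => ∃ e ∈ T, v ∈ e)

/-- Two vertices are connected in an edge set `T` if there is a path between them
using only edges of `T`. -/
def ConnIn (T : Finset (Sym2 V)) (u w : V) : Prop :=
  (SimpleGraph.fromEdgeSet (↑T : Set (Sym2 V))).Reachable u w

/-- A tree subgraph of `G` is a nonempty edge set `T ⊆ E(G)` whose induced subgraph is
connected and acyclic. -/
def IsTreeSubgraph (G : SimpleGraph V) (T : Finset (Sym2 V)) : Prop :=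
  (↑T : Set (Sym2 V)) ⊆ G.edgeSet ∧ T.Nonempty ∧
  (∀ u ∈ edgeVerts T, ∀ w ∈ edgeVerts T, ConnIn T u w) ∧
  (SimpleGraph.fromEdgeSet (↑T : Set (Sym2 V))).IsAcyclic

/-!
Removing the edge {v, w} from the tree T leaves two subtrees, one containing v and one
containing w, and k lies in one of them. If k is on the side of v, then {w, k} joins the two
subtrees again without closing a cycle, so T - {v, w} + {w, k} is a tree on the same vertices,
and it costs no more because ℓ({w, k}) ≤ ℓ({v, w}). If k is on the side of w, add {v, k} instead.
-/

open SimpleGraph Finset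

theorem Finset.sum_insert_erase_le {α M : Type*} [DecidableEq α] [AddCommMonoid M]
    [PartialOrder M] [IsOrderedAddMonoid M] {s : Finset α} {a b : α} (f : α → M)
    (ha : a ∉ s.erase b) (hb : b ∈ s)
    (h : f a ≤ f b) : ∑ x ∈ insert a (s.erase b), f x ≤ ∑ x ∈ s, f x := by
  rw [sum_insert ha, ← add_sum_erase s f hb]
  gcongr

theorem Finset.insert_erase_sdiff_of_mem {α : Type*} [DecidableEq α] {s t : Finset α} {a b : α}
    (ha : a ∈ t) (hb : b ∈ t) : insert a (s.erase b) \ t = s \ t := by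
  rw [insert_sdiff_of_mem _ ha, erase_sdiff_comm, erase_eq_of_notMem (notMem_sdiff_of_mem_right hb)]

section

omit [Fintype V] [DecidableEq V]

lemma ConnIn.symm {T : Finset (Sym2 V)} {x y : V} (h : ConnIn T x y) : ConnIn T y x :=
  Reachable.symm h

lemma ConnIn.trans {T : Finset (Sym2 V)} {x y z : V} (hxy : ConnIn T x y) (hyz : ConnIn T y z) :
    ConnIn T x z :=
  Reachable.trans hxy hyz

lemma ConnIn.mono {S T : Finset (Sym2 V)} {x y : V} (hST : S ⊆ T) (h : ConnIn S x y) :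
    ConnIn T x y :=
  Reachable.mono (fromEdgeSet_mono (by exact_mod_cast hST)) h

end

section

omit [Fintype V]

theorem SimpleGraph.Reachable.deleteEdges_or {H : SimpleGraph V} {x y : V} (w : V)
    (h : H.Reachable x y) :
    (H.deleteEdges {s(y, w)}).Reachable x y ∨ (H.deleteEdges {s(y, w)}).Reachable x w := by
  obtain ⟨p⟩ := h
  induction p with
  | nil => exact .inl .rfl
  | @cons a b y hab _ ih =>
    by_cases he : s(a, b) = s(y, w)
    · obtain ⟨rfl, -⟩ | ⟨rfl, -⟩ := Sym2.eq_iff.1 he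
      · exact .inl .rfl
      · exact .inr .rfl
    · have hab' : (H.deleteEdges {s(y, w)}).Adj a b := by simp [hab, he]
      exact ih.imp hab'.reachable.trans hab'.reachable.trans

lemma fromEdgeSet_coe_erase (T : Finset (Sym2 V)) (e : Sym2 V) :
    fromEdgeSet (↑(T.erase e) : Set (Sym2 V)) =
      (fromEdgeSet (↑T : Set (Sym2 V))).deleteEdges {e} := by
  rw [deleteEdges_fromEdgeSet, coe_erase]

lemma fromEdgeSet_coe_insert (T : Finset (Sym2 V)) (a b : V) :
    fromEdgeSet (↑(insert s(a, b) T) : Set (Sym2 V)) =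
      fromEdgeSet (↑T : Set (Sym2 V)) ⊔ edge a b := by
  rw [coe_insert, Set.insert_eq, fromEdgeSet_union, sup_comm, edge]

lemma ConnIn.of_mem {T : Finset (Sym2 V)} {x y : V} (h : s(x, y) ∈ T) : ConnIn T x y := by
  by_cases hxy : x = y
  · exact hxy ▸ Reachable.rfl
  · exact Adj.reachable (by simp [h, hxy])

lemma ConnIn.erase_or {T : Finset (Sym2 V)} {x y : V} (w : V) (h : ConnIn T x y) :
    ConnIn (T.erase s(y, w)) x y ∨ ConnIn (T.erase s(y, w)) x w := by
  simpa only [ConnIn, fromEdgeSet_coe_erase] using h.deleteEdges_or w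

lemma not_connIn_erase_of_isAcyclic {T : Finset (Sym2 V)} {v w : V}
    (hT : (fromEdgeSet (↑T : Set (Sym2 V))).IsAcyclic) (he : s(v, w) ∈ T) (hvw : v ≠ w) :
    ¬ ConnIn (T.erase s(v, w)) v w := by
  rw [ConnIn, fromEdgeSet_coe_erase, ← isBridge_iff]
  exact isAcyclic_iff_forall_isBridge.1 hT (by simp [he, hvw])

lemma isAcyclic_insert_of_not_connIn {T : Finset (Sym2 V)} {a b : V}
    (hT : (fromEdgeSet (↑T : Set (Sym2 V))).IsAcyclic) (h : ¬ ConnIn T a b) :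
    (fromEdgeSet (↑(insert s(a, b) T) : Set (Sym2 V))).IsAcyclic := by
  rw [fromEdgeSet_coe_insert]
  exact hT.sup_edge_of_not_reachable h

end

lemma mem_edgeVerts {T : Finset (Sym2 V)} {x : V} : x ∈ edgeVerts T ↔ ∃ e ∈ T, x ∈ e := by
  simp [edgeVerts]

lemma mem_edgeVerts_of_mem {T : Finset (Sym2 V)} {e : Sym2 V} (he : e ∈ T) {x : V} (hx : x ∈ e) :
    x ∈ edgeVerts T :=
  mem_edgeVerts.2 ⟨e, he, hx⟩

lemma edgeVerts_mono {S T : Finset (Sym2 V)} (h : S ⊆ T) : edgeVerts S ⊆ edgeVerts T := by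
  intro x hx
  obtain ⟨e, he, hxe⟩ := mem_edgeVerts.1 hx
  exact mem_edgeVerts_of_mem (h he) hxe

lemma ConnIn.mem_edgeVerts {T : Finset (Sym2 V)} {x y : V} (h : ConnIn T x y) (hxy : x ≠ y) :
    x ∈ edgeVerts T := by
  obtain ⟨p⟩ := h
  cases p with
  | nil => exact absurd rfl hxy
  | cons hadj _ =>
    exact mem_edgeVerts_of_mem ((fromEdgeSet_adj _).1 hadj).1 (Sym2.mem_mk_left _ _)

section Exchange

variable {G : SimpleGraph V} {T : Finset (Sym2 V)} {v w k : V}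

lemma edgeVerts_insert_erase (hmem : s(v, w) ∈ T) (hvk : v ≠ k)
    (hkv : ConnIn (T.erase s(v, w)) k v) :
    edgeVerts (insert s(w, k) (T.erase s(v, w))) = edgeVerts T := by
  apply Subset.antisymm
  · intro x hx
    obtain ⟨e, he, hxe⟩ := mem_edgeVerts.1 hx
    rcases mem_insert.1 he with rfl | he
    · rcases Sym2.mem_iff.1 hxe with rfl | rfl
      · exact mem_edgeVerts_of_mem hmem (Sym2.mem_mk_right _ _)
      · exact edgeVerts_mono (erase_subset _ _) (hkv.mem_edgeVerts hvk.symm)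
    · exact mem_edgeVerts_of_mem (mem_of_mem_erase he) hxe
  · intro x hx
    obtain ⟨e, he, hxe⟩ := mem_edgeVerts.1 hx
    by_cases hev : e = s(v, w)
    · subst hev
      rcases Sym2.mem_iff.1 hxe with rfl | rfl
      · exact edgeVerts_mono (subset_insert _ _) (hkv.symm.mem_edgeVerts hvk)
      · exact mem_edgeVerts_of_mem (mem_insert_self _ _) (Sym2.mem_mk_left _ _)
    · exact mem_edgeVerts_of_mem (mem_insert_of_mem (mem_erase_of_ne_of_mem hev he)) hxe

lemma IsTreeSubgraph.not_connIn_erase_of_connIn (hT : IsTreeSubgraph G T) (hmem : s(v, w) ∈ T)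
    (hkv : ConnIn (T.erase s(v, w)) k v) : ¬ ConnIn (T.erase s(v, w)) w k := fun h ↦
  not_connIn_erase_of_isAcyclic hT.2.2.2 hmem (G.mem_edgeSet.1 (hT.1 hmem)).ne
    (hkv.symm.trans h.symm)

lemma IsTreeSubgraph.insert_erase (hT : IsTreeSubgraph G T) (hmem : s(v, w) ∈ T) (hvk : v ≠ k)
    (hwk : s(w, k) ∈ G.edgeSet) (hkv : ConnIn (T.erase s(v, w)) k v) :
    IsTreeSubgraph G (insert s(w, k) (T.erase s(v, w))) := by
  have hnwk := hT.not_connIn_erase_of_connIn hmem hkv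
  obtain ⟨hTG, -, hconn, hacyc⟩ := hT
  have hsub : T.erase s(v, w) ⊆ insert s(w, k) (T.erase s(v, w)) := subset_insert _ _
  have hreach (x) (hx : x ∈ edgeVerts T) : ConnIn (insert s(w, k) (T.erase s(v, w))) x v := by
    rcases (hconn x hx v (mem_edgeVerts_of_mem hmem (Sym2.mem_mk_left _ _))).erase_or w with
      hxv | hxw
    · exact hxv.mono hsub
    · exact (hxw.mono hsub).trans ((ConnIn.of_mem (mem_insert_self _ _)).trans (hkv.mono hsub))
  refine ⟨?_, insert_nonempty _ _, ?_, ?_⟩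
  · rw [coe_insert]
    exact Set.insert_subset hwk ((coe_subset.2 (erase_subset _ _)).trans hTG)
  · rw [edgeVerts_insert_erase hmem hvk hkv]
    exact fun x hx y hy ↦ (hreach x hx).trans (hreach y hy).symm
  · exact isAcyclic_insert_of_not_connIn
      (hacyc.anti (fromEdgeSet_mono (coe_subset.2 (erase_subset _ _)))) hnwk

lemma IsTreeSubgraph.exists_swap (len : Sym2 V → ℝ) (hT : IsTreeSubgraph G T)
    (hmem : s(v, w) ∈ T) (hvk : v ≠ k) (hwk : s(w, k) ∈ G.edgeSet)
    (hkv : ConnIn (T.erase s(v, w)) k v) (hlen : len s(w, k) ≤ len s(v, w)) :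
    ∃ T' : Finset (Sym2 V), IsTreeSubgraph G T' ∧
      edgeVerts T' = edgeVerts T ∧
      (∑ e ∈ T', len e) ≤ (∑ e ∈ T, len e) ∧
      s(v, w) ∉ T' ∧
      T \ {s(v, w), s(v, k), s(w, k)} = T' \ {s(v, w), s(v, k), s(w, k)} := by
  refine ⟨insert s(w, k) (T.erase s(v, w)), hT.insert_erase hmem hvk hwk hkv,
    edgeVerts_insert_erase hmem hvk hkv,
    sum_insert_erase_le len (fun h ↦ hT.not_connIn_erase_of_connIn hmem hkv (.of_mem h)) hmem hlen,
    ?_, (insert_erase_sdiff_of_mem (by simp) (by simp)).symm⟩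
  simp [hvk, (G.mem_edgeSet.1 hwk).ne]

end Exchange

theorem tree_triangle_swap_general
    (G : SimpleGraph V) (len : Sym2 V → ℝ)
    (T : Finset (Sym2 V)) (hT : IsTreeSubgraph G T)
    (v w k : V) (hvk : v ≠ k) (hwk : w ≠ k)
    (hvT : v ∈ edgeVerts T) (hkT : k ∈ edgeVerts T)
    (e2 : s(v, k) ∈ G.edgeSet) (e3 : s(w, k) ∈ G.edgeSet)
    (h1 : len s(v, k) ≤ len s(v, w)) (h2 : len s(w, k) ≤ len s(v, w))
    (hmem : s(v, w) ∈ T) :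
    ∃ T' : Finset (Sym2 V), IsTreeSubgraph G T' ∧
      edgeVerts T' = edgeVerts T ∧
      (∑ e ∈ T', len e) ≤ (∑ e ∈ T, len e) ∧
      s(v, w) ∉ T' ∧
      T \ {s(v, w), s(v, k), s(w, k)} = T' \ {s(v, w), s(v, k), s(w, k)} := by
  rcases (hT.2.2.1 k hkT v hvT).erase_or w with hkv | hkw
  · exact hT.exists_swap len hmem hvk e3 hkv h2
  · have hswap : s(w, v) = s(v, w) := Sym2.eq_swap
    have := hT.exists_swap len (hswap ▸ hmem) hwk e2 (hswap ▸ hkw) (hswap ▸ h1)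
    rwa [hswap, pair_comm] at this

/-- If three distinct vertices v, w, k of a tree subgraph T form a triangle in G whose most
expensive edge is {v, w}, and {v, w} ∈ T, then there is a tree subgraph T'\'' with the same
vertices, no greater cost, avoiding {v, w}, and agreeing with T outside the triangle. -/
theorem tree_triangle_swap
    (G : SimpleGraph V) (len : Sym2 V → ℝ) (hlen : ∀ e ∈ G.edgeSet, 0 ≤ len e)
    (T : Finset (Sym2 V)) (hT : IsTreeSubgraph G T)
    (v w k : V) (hvw : v ≠ w) (hvk : v ≠ k) (hwk : w ≠ k)
    (hvT : v ∈ edgeVerts T) (hwT : w ∈ edgeVerts T) (hkT : k ∈ edgeVerts T)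
    (e1 : s(v, w) ∈ G.edgeSet) (e2 : s(v, k) ∈ G.edgeSet) (e3 : s(w, k) ∈ G.edgeSet)
    (h1 : len s(v, k) ≤ len s(v, w)) (h2 : len s(w, k) ≤ len s(v, w))
    (hmem : s(v, w) ∈ T) :
    ∃ T' : Finset (Sym2 V), IsTreeSubgraph G T' ∧
      edgeVerts T' = edgeVerts T ∧
      (∑ e ∈ T', len e) ≤ (∑ e ∈ T, len e) ∧
      s(v, w) ∉ T' ∧
      T \ {s(v, w), s(v, k), s(w, k)} = T' \ {s(v, w), s(v, k), s(w, k)} :=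
  tree_triangle_swap_general G len T hT v w k hvk hwk hvT hkT e2 e3 h1 h2 hmem
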